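/- arXiv:1903.01253 — 2 statements merged into one kernel-verified Lean document; each statement's English description precedes it below -/
import Mathlib

section
/- Let (η_k)_{k∈ℤ} be independent with E[η_k] = 0 and E[η_k²] = ν², let (c_k)_{k≥0} satisfy |c_k| ≤ Cρ^k with 0 < ρ < 1, and let ε_t = Σ_{k=0}^∞ c_k η_{t−k}. Suppose a₁, …, a_p and the c_k satisfy c_k − Σ_{j=1}^p a_j c_{k−j} = 1_{k=0} for all k ≥ 0 (with c_k = 0 for k < 0). Fix q ≥ 1 and let γ_q(ℓ) = Cov(Δ_q ε_t, Δ_q ε_{t−ℓ}) where Δ_q ε_t = ε_t − ε_{t−q}. Then γ_q(ℓ) − Σ_{j=1}^p a_j γ_q(ℓ − j) = −ν² c_{q−ℓ} for 1 ≤ ℓ ≤ q, and γ_q(ℓ) − Σ_{j=1}^p a_j γ_q(ℓ − j) = 0 for ℓ ≥ q + 1. -/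
set_option linter.unusedSectionVars false
set_option maxHeartbeats 1000000

open MeasureTheory Filter

section AuxYW

variable {Ω : Type*} [MeasurableSpace Ω] {μ : Measure Ω} [IsProbabilityMeasure μ]

lemma aux_integrable_mul {f g : Ω → ℝ} (hf : MemLp f 2 μ) (hg : MemLp g 2 μ) :
    Integrable (fun ω => f ω * g ω) μ := by
  refine ((hf.integrable_sq.add hg.integrable_sq).div_const 2).mono'
    (hf.aestronglyMeasurable.mul hg.aestronglyMeasurable) (ae_of_all _ fun ω => ?_)
  simp only [Real.norm_eq_abs, abs_mul, Pi.add_apply]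
  nlinarith [sq_abs (f ω), sq_abs (g ω), sq_nonneg (|f ω| - |g ω|)]

lemma aux_CS {f g : Ω → ℝ} (hf : MemLp f 2 μ) (hg : MemLp g 2 μ) :
    |∫ ω, f ω * g ω ∂μ| ≤ Real.sqrt (∫ ω, f ω ^ 2 ∂μ) * Real.sqrt (∫ ω, g ω ^ 2 ∂μ) := by
  have h2 : ENNReal.ofReal (2:ℝ) = 2 := by norm_num
  have hpq : Real.HolderConjugate 2 2 := Real.HolderConjugate.two_two
  have hfa : MemLp (fun ω => |f ω|) (ENNReal.ofReal 2) μ := by rw [h2]; exact hf.abs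
  have hga : MemLp (fun ω => |g ω|) (ENNReal.ofReal 2) μ := by rw [h2]; exact hg.abs
  have key := integral_mul_le_Lp_mul_Lq_of_nonneg hpq
    (ae_of_all _ fun ω => abs_nonneg (f ω)) (ae_of_all _ fun ω => abs_nonneg (g ω)) hfa hga
  have e1 : ∀ x : ℝ, |x| ^ (2:ℝ) = x ^ 2 := fun x => by
    rw [show (2:ℝ) = ((2:ℕ):ℝ) by norm_num, Real.rpow_natCast, sq_abs]
  simp only [e1] at key
  calc |∫ ω, f ω * g ω ∂μ| ≤ ∫ ω, |f ω * g ω| ∂μ := by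
        simpa [abs_mul] using norm_integral_le_integral_norm (μ := μ) (fun ω => f ω * g ω)
    _ = ∫ ω, |f ω| * |g ω| ∂μ := by simp [abs_mul]
    _ ≤ (∫ ω, f ω ^ 2 ∂μ) ^ ((1:ℝ)/2) * (∫ ω, g ω ^ 2 ∂μ) ^ ((1:ℝ)/2) := key
    _ = Real.sqrt (∫ ω, f ω ^ 2 ∂μ) * Real.sqrt (∫ ω, g ω ^ 2 ∂μ) := by
        rw [Real.sqrt_eq_rpow, Real.sqrt_eq_rpow]

lemma aux_tendsto {f h : Ω → ℝ} (hf : MemLp f 2 μ) (hh : MemLp h 2 μ)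
    {g : ℕ → Ω → ℝ} (hg : ∀ n, MemLp (g n) 2 μ)
    (hconv : Tendsto (fun n => ∫ ω, (h ω - g n ω) ^ 2 ∂μ) atTop (nhds 0)) :
    Tendsto (fun n => ∫ ω, f ω * g n ω ∂μ) atTop (nhds (∫ ω, f ω * h ω ∂μ)) := by
  have key : Tendsto (fun n => ∫ ω, f ω * (h ω - g n ω) ∂μ) atTop (nhds 0) := by
    apply squeeze_zero_norm
      (fun n => by simpa using aux_CS hf (hh.sub (hg n)))
    have h1 : Tendsto (fun n => Real.sqrt (∫ ω, (h ω - g n ω) ^ 2 ∂μ)) atTop (nhds 0) := by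
      simpa [Function.comp_def] using (Real.continuous_sqrt.tendsto 0).comp hconv
    simpa using h1.const_mul (Real.sqrt (∫ ω, f ω ^ 2 ∂μ))
  have hfun : ∀ n, ∫ ω, f ω * g n ω ∂μ
      = ∫ ω, f ω * h ω ∂μ - ∫ ω, f ω * (h ω - g n ω) ∂μ := by
    intro n
    have hsub : MemLp (fun ω => h ω - g n ω) 2 μ := hh.sub (hg n)
    rw [← integral_sub (aux_integrable_mul hf hh) (aux_integrable_mul hf hsub)]
    congr 1; ext ω; ring
  simp_rw [hfun]
  simpa using tendsto_const_nhds.sub key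

end AuxYW

/-- Yule–Walker-type equations for the q-th differences of a causal AR(p) process. -/
theorem stmt_13 {Ω : Type*} [MeasurableSpace Ω] (μ : Measure Ω) [IsProbabilityMeasure μ]
    (η : ℤ → Ω → ℝ) (hηmeas : ∀ k, Measurable (η k))
    (hindep : ProbabilityTheory.iIndepFun η μ)
    (ν : ℝ) (hν : 0 < ν)
    (hmean : ∀ k, ∫ ω, η k ω ∂μ = 0)
    (hvar : ∀ k, ∫ ω, (η k ω) ^ 2 ∂μ = ν ^ 2)
    (C ρ : ℝ) (hC : 0 < C) (hρ0 : 0 < ρ) (hρ1 : ρ < 1)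
    (c : ℤ → ℝ) (hcneg : ∀ k : ℤ, k < 0 → c k = 0)
    (hcdecay : ∀ k : ℕ, |c (k : ℤ)| ≤ C * ρ ^ k)
    (p : ℕ) (a : ℕ → ℝ)
    (hrec : ∀ k : ℤ, 0 ≤ k →
      c k - ∑ j ∈ Finset.Icc 1 p, a j * c (k - j) = if k = 0 then 1 else 0)
    (ε : ℤ → Ω → ℝ) (hεL2 : ∀ t, MemLp (ε t) 2 μ)
    (hε : ∀ t : ℤ, Tendsto
      (fun n => ∫ ω, (ε t ω - ∑ k ∈ Finset.range n, c (k : ℤ) * η (t - k) ω) ^ 2 ∂μ)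
      atTop (nhds 0))
    (q : ℤ) (hq : 1 ≤ q) (γq : ℤ → ℝ)
    (hγq : ∀ t ℓ : ℤ, γq ℓ =
      ∫ ω, (ε t ω - ε (t - q) ω) * (ε (t - ℓ) ω - ε (t - ℓ - q) ω) ∂μ) :
    (∀ ℓ : ℤ, 1 ≤ ℓ → ℓ ≤ q →
      γq ℓ - ∑ j ∈ Finset.Icc 1 p, a j * γq (ℓ - j) = -ν ^ 2 * c (q - ℓ)) ∧
    (∀ ℓ : ℤ, q + 1 ≤ ℓ →
      γq ℓ - ∑ j ∈ Finset.Icc 1 p, a j * γq (ℓ - j) = 0) := by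
  -- η is in L²
  have hη2 : ∀ k, MemLp (η k) 2 μ := by
    intro k
    rw [memLp_two_iff_integrable_sq (hηmeas k).aestronglyMeasurable]
    by_contra hcon
    have := hvar k
    rw [integral_undef hcon] at this
    nlinarith
  -- second moments of η
  have hprod : ∀ j k : ℤ, ∫ ω, η j ω * η k ω ∂μ = if j = k then ν ^ 2 else 0 := by
    intro j k
    by_cases h : j = k
    · subst h; simp only [if_pos rfl]
      simpa [sq] using hvar j
    · rw [if_neg h]
      have := ProbabilityTheory.IndepFun.integral_fun_mul_eq_mul_integral (hindep.indepFun h) (hηmeas j).aestronglyMeasurable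
        (hηmeas k).aestronglyMeasurable
      rw [this, hmean, hmean, mul_zero]
  -- key limit lemma: covariance with ε from covariance with η
  have hkey : ∀ (f : Ω → ℝ), MemLp f 2 μ → ∀ s : ℤ,
      (∀ u : ℤ, ∫ ω, f ω * η u ω ∂μ = if u = s then ν ^ 2 else 0) →
      ∀ t : ℤ, ∫ ω, f ω * ε t ω ∂μ = ν ^ 2 * c (t - s) := by
    intro f hf s hfη t
    have hS2 : ∀ n : ℕ, MemLp (fun ω => ∑ k ∈ Finset.range n, c k * η (t - k) ω) 2 μ :=
      fun n => memLp_finset_sum (Finset.range n) (fun k _ => ((hη2 (t - k)).const_mul (c k)))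
    have hlim := aux_tendsto hf (hεL2 t) hS2 (hε t)
    have heval : ∀ n : ℕ, ∫ ω, f ω * (∑ k ∈ Finset.range n, c k * η (t - k) ω) ∂μ
        = ∑ k ∈ Finset.range n, c k * (if (t - (k:ℤ)) = s then ν ^ 2 else 0) := by
      intro n
      have hpt : ∀ ω, f ω * (∑ k ∈ Finset.range n, c k * η (t - k) ω)
          = ∑ k ∈ Finset.range n, c k * (f ω * η (t - k) ω) := by
        intro ω
        rw [Finset.mul_sum]
        exact Finset.sum_congr rfl fun k _ => by ring
      have hi := integral_finset_sum (μ := μ) (Finset.range n)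
        (f := fun (k : ℕ) (ω : Ω) => c (k:ℤ) * (f ω * η (t - (k:ℤ)) ω))
        (fun k _ => (aux_integrable_mul hf (hη2 (t - k))).const_mul (c k))
      have he : ∫ ω, f ω * (∑ k ∈ Finset.range n, c k * η (t - k) ω) ∂μ
          = ∫ ω, ∑ k ∈ Finset.range n, c (k:ℤ) * (f ω * η (t - (k:ℤ)) ω) ∂μ := by
        congr 1; ext ω; exact hpt ω
      rw [he, hi]
      exact Finset.sum_congr rfl fun k _ => by rw [integral_const_mul, hfη]
    have hconst : ∀ᶠ n in atTop,
        ∑ k ∈ Finset.range n, c k * (if (t - (k:ℤ)) = s then ν ^ 2 else 0)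
          = ν ^ 2 * c (t - s) := by
      by_cases hts : 0 ≤ t - s
      · filter_upwards [eventually_ge_atTop ((t - s).toNat + 1)] with n hn
        have hm : (((t - s).toNat : ℤ)) = t - s := Int.toNat_of_nonneg hts
        have hterm : ∀ k ∈ Finset.range n,
            c k * (if (t - (k:ℤ)) = s then ν ^ 2 else 0)
              = if k = (t - s).toNat then c k * ν ^ 2 else 0 := by
          intro k _
          by_cases hk : (k : ℤ) = t - s
          · have hk' : k = (t - s).toNat := by omega
            have hc : t - (k:ℤ) = s := by omega
            rw [if_pos hc, if_pos hk']
          · have h1 : ¬ (t - (k:ℤ) = s) := by omega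
            have h2 : ¬ (k = (t - s).toNat) := by omega
            simp [h1, h2]
        rw [Finset.sum_congr rfl hterm, Finset.sum_ite_eq' (Finset.range n)]
        have hmem : (t - s).toNat ∈ Finset.range n := Finset.mem_range.mpr (by omega)
        rw [if_pos hmem, hm]; ring
      · apply Eventually.of_forall; intro n
        have hterm : ∀ k ∈ Finset.range n,
            c k * (if (t - (k:ℤ)) = s then ν ^ 2 else 0) = 0 := by
          intro k _
          have : ¬ (t - (k:ℤ) = s) := by omega
          simp [this]
        rw [Finset.sum_congr rfl hterm, Finset.sum_const_zero,
          hcneg (t - s) (by omega), mul_zero]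
    have hlim2 : Tendsto (fun n => ∫ ω, f ω * (∑ k ∈ Finset.range n, c k * η (t - k) ω) ∂μ)
        atTop (nhds (ν ^ 2 * c (t - s))) := by
      refine Tendsto.congr' ?_ tendsto_const_nhds
      filter_upwards [hconst] with n hn
      rw [heval n]; exact hn.symm
    exact tendsto_nhds_unique hlim hlim2
  -- covariance of η with ε
  have hηε : ∀ u s : ℤ, ∫ ω, η u ω * ε s ω ∂μ = ν ^ 2 * c (s - u) := by
    intro u s
    refine hkey (η u) (hη2 u) u (fun w => ?_) s
    rw [hprod u w]
    exact if_congr eq_comm rfl rfl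
  -- the AR residual Y
  set Y : ℤ → Ω → ℝ := fun t ω => ε t ω - ∑ j ∈ Finset.Icc 1 p, a j * ε (t - j) ω with hYdef
  have hY2 : ∀ t, MemLp (Y t) 2 μ := fun t =>
    (hεL2 t).sub (memLp_finset_sum (Finset.Icc 1 p) fun j _ => (hεL2 (t - j)).const_mul (a j))
  have hYη : ∀ t u : ℤ, ∫ ω, Y t ω * η u ω ∂μ = if u = t then ν ^ 2 else 0 := by
    intro t u
    have hpt : ∀ ω, Y t ω * η u ω
        = ε t ω * η u ω - ∑ j ∈ Finset.Icc 1 p, a j * (ε (t - j) ω * η u ω) := by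
      intro ω
      simp only [hYdef, sub_mul, Finset.sum_mul]
      congr 1
      exact Finset.sum_congr rfl fun j _ => by ring
    simp_rw [hpt]
    rw [integral_sub (aux_integrable_mul (hεL2 t) (hη2 u))
      (integrable_finset_sum (Finset.Icc 1 p) fun j _ =>
        (aux_integrable_mul (hεL2 (t - j)) (hη2 u)).const_mul (a j)),
      integral_finset_sum (Finset.Icc 1 p) fun j _ =>
        (aux_integrable_mul (hεL2 (t - j)) (hη2 u)).const_mul (a j)]
    have hεη : ∀ s : ℤ, ∫ ω, ε s ω * η u ω ∂μ = ν ^ 2 * c (s - u) := by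
      intro s
      rw [← hηε u s]
      exact integral_congr_ae (ae_of_all _ fun ω => mul_comm _ _)
    rw [hεη]
    have hsum : ∑ j ∈ Finset.Icc 1 p, ∫ ω, a j * (ε (t - j) ω * η u ω) ∂μ
        = ν ^ 2 * ∑ j ∈ Finset.Icc 1 p, a j * c ((t - u) - j) := by
      rw [Finset.mul_sum]
      refine Finset.sum_congr rfl fun j _ => ?_
      rw [integral_const_mul, hεη (t - j)]
      have : t - (j:ℤ) - u = (t - u) - j := by ring
      rw [this]; ring
    rw [hsum]
    by_cases hk : 0 ≤ t - u
    · have := hrec (t - u) hk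
      have hgoal : ν ^ 2 * c (t - u) - ν ^ 2 * ∑ j ∈ Finset.Icc 1 p, a j * c ((t - u) - j)
          = ν ^ 2 * (if t - u = 0 then 1 else 0) := by
        rw [← this]; ring
      rw [hgoal]
      by_cases h : u = t
      · simp [h]
      · have : ¬ (t - u = 0) := by omega
        simp [h, this]
    · have h1 : c (t - u) = 0 := hcneg _ (by omega)
      have h2 : ∀ j ∈ Finset.Icc 1 p, a j * c ((t - u) - j) = 0 := by
        intro j hj
        have hj1 : 1 ≤ j := (Finset.mem_Icc.mp hj).1
        rw [hcneg _ (by omega), mul_zero]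
      have h3 : ¬ (u = t) := by omega
      rw [h1, Finset.sum_congr rfl h2]
      simp [h3]
  have hYε : ∀ t s : ℤ, ∫ ω, Y t ω * ε s ω ∂μ = ν ^ 2 * c (s - t) :=
    fun t s => hkey (Y t) (hY2 t) t (hYη t) s
  -- main computation
  have main : ∀ ℓ : ℤ, 1 ≤ ℓ →
      γq ℓ - ∑ j ∈ Finset.Icc 1 p, a j * γq (ℓ - j) = -ν ^ 2 * c (q - ℓ) := by
    intro ℓ hℓ
    set D : Ω → ℝ := fun ω => ε (-ℓ) ω - ε (-ℓ - q) ω with hDdef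
    have hD2 : MemLp D 2 μ := (hεL2 _).sub (hεL2 _)
    set G : ℤ → ℝ := fun s => ∫ ω, ε s ω * D ω ∂μ with hGdef
    have hGint : ∀ s : ℤ, Integrable (fun ω => ε s ω * D ω) μ :=
      fun s => aux_integrable_mul (hεL2 s) hD2
    -- γq in terms of G
    have hsplit : ∀ t : ℤ, ∫ ω, (ε t ω - ε (t - q) ω) * D ω ∂μ = G t - G (t - q) := by
      intro t
      have hpt : ∀ ω, (ε t ω - ε (t - q) ω) * D ω = ε t ω * D ω - ε (t - q) ω * D ω :=
        fun ω => by ring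
      simp_rw [hpt]
      rw [integral_sub (hGint t) (hGint (t - q))]
    have hγℓ : γq ℓ = G 0 - G (-q) := by
      have h0 := hsplit 0
      rw [zero_sub] at h0
      have := hγq 0 ℓ
      simp only [zero_sub] at this
      rw [this]
      exact h0
    have hγℓj : ∀ j : ℕ, γq (ℓ - j) = G (-(j:ℤ)) - G (-(j:ℤ) - q) := by
      intro j
      have e : (-(j:ℤ)) - (ℓ - j) = -ℓ := by ring
      have := hγq (-(j:ℤ)) (ℓ - j)
      rw [e] at this
      rw [this]
      exact hsplit (-(j:ℤ))
    -- Y against D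
    have hYD : ∀ t : ℤ, ∫ ω, Y t ω * D ω ∂μ
        = G t - ∑ j ∈ Finset.Icc 1 p, a j * G (t - j) := by
      intro t
      have hpt : ∀ ω, Y t ω * D ω
          = ε t ω * D ω - ∑ j ∈ Finset.Icc 1 p, a j * (ε (t - j) ω * D ω) := by
        intro ω
        simp only [hYdef, sub_mul, Finset.sum_mul]
        congr 1
        exact Finset.sum_congr rfl fun j _ => by ring
      simp_rw [hpt]
      rw [integral_sub (hGint t) (integrable_finset_sum (Finset.Icc 1 p) fun j _ =>
        (hGint (t - j)).const_mul (a j)),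
        integral_finset_sum (Finset.Icc 1 p) fun j _ => (hGint (t - j)).const_mul (a j)]
      congr 1
      exact Finset.sum_congr rfl fun j _ => by rw [integral_const_mul]
    have hYDval : ∀ t : ℤ, ∫ ω, Y t ω * D ω ∂μ
        = ν ^ 2 * c (-ℓ - t) - ν ^ 2 * c (-ℓ - q - t) := by
      intro t
      have hpt : ∀ ω, Y t ω * D ω = Y t ω * ε (-ℓ) ω - Y t ω * ε (-ℓ - q) ω :=
        fun ω => by simp only [hDdef]; ring
      simp_rw [hpt]
      rw [integral_sub (aux_integrable_mul (hY2 t) (hεL2 _))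
        (aux_integrable_mul (hY2 t) (hεL2 _)), hYε, hYε]
    -- combine
    have hcomb : γq ℓ - ∑ j ∈ Finset.Icc 1 p, a j * γq (ℓ - j)
        = (∫ ω, Y 0 ω * D ω ∂μ) - ∫ ω, Y (-q) ω * D ω ∂μ := by
      rw [hγℓ, hYD 0, hYD (-q)]
      have e1 : ∑ j ∈ Finset.Icc 1 p, a j * γq (ℓ - j)
          = ∑ j ∈ Finset.Icc 1 p, a j * G (0 - j)
            - ∑ j ∈ Finset.Icc 1 p, a j * G (-q - j) := by
        rw [← Finset.sum_sub_distrib]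
        refine Finset.sum_congr rfl fun j _ => ?_
        rw [hγℓj j]
        have e2 : (0:ℤ) - j = -(j:ℤ) := by ring
        have e3 : -q - (j:ℤ) = -(j:ℤ) - q := by ring
        rw [e2, e3]; ring
      rw [e1]; ring
    rw [hcomb, hYDval 0, hYDval (-q)]
    have e4 : -ℓ - (0:ℤ) = -ℓ := by ring
    have e5 : -ℓ - q - (0:ℤ) = -ℓ - q := by ring
    have e6 : -ℓ - (-q) = q - ℓ := by ring
    have e7 : -ℓ - q - (-q) = -ℓ := by ring
    rw [e4, e5, e6, e7, hcneg (-ℓ) (by omega), hcneg (-ℓ - q) (by omega)]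
    ring
  constructor
  · intro ℓ hℓ1 _; exact main ℓ hℓ1
  · intro ℓ hℓ
    rw [main ℓ (by omega), hcneg (q - ℓ) (by omega), mul_zero]
end

section
/- Let K : ℝ → ℝ be Lipschitz continuous with constant L, supported on [−1,1], and let ℓ ≥ 0 be an integer. Then there is a constant C (depending only on L, sup|K| and ℓ) such that for all T ≥ 1, all h ∈ (0, 1/2] with Th ≥ 1, and all u ∈ [0,1]: |(1/(Th)) Σ_{t=1}^T K((t/T − u)/h)·((t/T − u)/h)^ℓ − ∫_0^1 (1/h) K((w − u)/h)·((w − u)/h)^ℓ dw| ≤ C/(Th). -/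
/-- Auxiliary: `x ↦ x^n` is `n`-Lipschitz on `[-1,1]`. -/
lemma stmt_16_pow_lip (n : ℕ) : ∀ x y : ℝ, |x| ≤ 1 → |y| ≤ 1 →
    |x ^ n - y ^ n| ≤ n * |x - y| := by
  induction n with
  | zero => intro x y _ _; simp
  | succ n ih =>
    intro x y hx hy
    have h1 : x ^ (n + 1) - y ^ (n + 1) = x * (x ^ n - y ^ n) + y ^ n * (x - y) := by ring
    have hyn : |y ^ n| ≤ 1 := by rw [abs_pow]; exact pow_le_one₀ (abs_nonneg _) hy
    calc |x ^ (n + 1) - y ^ (n + 1)| ≤ |x * (x ^ n - y ^ n)| + |y ^ n * (x - y)| := by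
          rw [h1]; exact abs_add_le _ _
      _ = |x| * |x ^ n - y ^ n| + |y ^ n| * |x - y| := by rw [abs_mul, abs_mul]
      _ ≤ 1 * (n * |x - y|) + 1 * |x - y| := by
          refine add_le_add (mul_le_mul hx (ih x y hx hy) (abs_nonneg _) zero_le_one)
            (mul_le_mul hyn le_rfl (abs_nonneg _) zero_le_one)
      _ = (↑(n + 1) : ℝ) * |x - y| := by push_cast; ring

/-- Riemann-sum approximation error for kernel averages with a Lipschitz,
compactly supported kernel. -/
theorem stmt_16 (K : ℝ → ℝ) (L : ℝ) (hL : 0 ≤ L)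
    (hLip : ∀ x y : ℝ, |K x - K y| ≤ L * |x - y|)
    (hsupp : ∀ x : ℝ, x ∉ Set.Icc (-1 : ℝ) 1 → K x = 0)
    (ℓ : ℕ) :
    ∃ C > 0, ∀ T : ℕ, 1 ≤ T → ∀ h : ℝ, 0 < h → h ≤ 1 / 2 → 1 ≤ (T : ℝ) * h →
      ∀ u ∈ Set.Icc (0 : ℝ) 1,
        |(1 / ((T : ℝ) * h)) *
            ∑ t ∈ Finset.Icc 1 T, K (((t : ℝ) / T - u) / h) * (((t : ℝ) / T - u) / h) ^ ℓ -
          ∫ w in Set.Icc (0 : ℝ) 1, (1 / h) * K ((w - u) / h) * ((w - u) / h) ^ ℓ| ≤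
        C / ((T : ℝ) * h) := by
  classical
  -- basic facts about K
  have hK2 : K 2 = 0 := hsupp 2 (by norm_num)
  have hKb : ∀ x : ℝ, |K x| ≤ 3 * L := by
    intro x
    by_cases hx : x ∈ Set.Icc (-1 : ℝ) 1
    · rw [Set.mem_Icc] at hx
      have h1 := hLip x 2
      rw [hK2, sub_zero] at h1
      have h2 : |x - 2| ≤ 3 := by rw [abs_le]; constructor <;> linarith [hx.1, hx.2]
      nlinarith [abs_nonneg (x - 2)]
    · rw [hsupp x hx, abs_zero]; positivity
  -- the clamp function
  set c : ℝ → ℝ := fun x => max (-1) (min 1 x) with hcdef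
  have hcb : ∀ x : ℝ, |c x| ≤ 1 := by
    intro x
    rw [abs_le]
    exact ⟨le_max_left _ _, max_le (by norm_num) (min_le_left _ _)⟩
  have hclip : ∀ x y : ℝ, |c x - c y| ≤ |x - y| := by
    intro x y
    show |max (-1) (min 1 x) - max (-1) (min 1 y)| ≤ |x - y|
    refine (abs_max_sub_max_le_max _ _ _ _).trans ?_
    simp only [sub_self, abs_zero]
    refine max_le (by positivity) ?_
    refine (abs_min_sub_min_le_max _ _ _ _).trans ?_
    simp only [sub_self, abs_zero]
    exact max_le (by positivity) le_rfl
  -- the modified kernel g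
  set g : ℝ → ℝ := fun x => K x * (c x) ^ ℓ with hgdef
  have hg_eq : ∀ x : ℝ, K x * x ^ ℓ = g x := by
    intro x
    show K x * x ^ ℓ = K x * (c x) ^ ℓ
    by_cases hx : x ∈ Set.Icc (-1 : ℝ) 1
    · rw [Set.mem_Icc] at hx
      have : c x = x := by
        show max (-1) (min 1 x) = x
        rw [min_eq_right hx.2, max_eq_right hx.1]
      rw [this]
    · rw [hsupp x hx, zero_mul, zero_mul]
  have hg0 : ∀ x : ℝ, 1 < |x| → g x = 0 := by
    intro x hx
    have hxn : x ∉ Set.Icc (-1 : ℝ) 1 := by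
      rw [Set.mem_Icc]
      intro hm
      exact absurd (abs_le.mpr hm) (not_le.mpr hx)
    show K x * (c x) ^ ℓ = 0
    rw [hsupp x hxn, zero_mul]
  set Lg : ℝ := L + 3 * L * ℓ with hLgdef
  have hLg0 : 0 ≤ Lg := by rw [hLgdef]; positivity
  have hgLip : ∀ x y : ℝ, |g x - g y| ≤ Lg * |x - y| := by
    intro x y
    have hdecomp : g x - g y = K x * ((c x) ^ ℓ - (c y) ^ ℓ) + (c y) ^ ℓ * (K x - K y) := by
      show K x * (c x) ^ ℓ - K y * (c y) ^ ℓ = _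
      ring
    have h1 : |K x * ((c x) ^ ℓ - (c y) ^ ℓ)| ≤ 3 * L * (ℓ * |x - y|) := by
      rw [abs_mul]
      refine mul_le_mul (hKb x) ?_ (abs_nonneg _) (by positivity)
      refine (stmt_16_pow_lip ℓ (c x) (c y) (hcb x) (hcb y)).trans ?_
      exact mul_le_mul_of_nonneg_left (hclip x y) (Nat.cast_nonneg ℓ)
    have h2 : |(c y) ^ ℓ * (K x - K y)| ≤ 1 * (L * |x - y|) := by
      rw [abs_mul]
      refine mul_le_mul ?_ (hLip x y) (abs_nonneg _) zero_le_one
      rw [abs_pow]; exact pow_le_one₀ (abs_nonneg _) (hcb y)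
    calc |g x - g y| ≤ |K x * ((c x) ^ ℓ - (c y) ^ ℓ)| + |(c y) ^ ℓ * (K x - K y)| := by
          rw [hdecomp]; exact abs_add_le _ _
      _ ≤ 3 * L * (ℓ * |x - y|) + 1 * (L * |x - y|) := add_le_add h1 h2
      _ = Lg * |x - y| := by rw [hLgdef]; ring
  have hgcont : Continuous g := by
    have : LipschitzWith (Real.toNNReal Lg) g := by
      refine LipschitzWith.of_dist_le_mul fun x y => ?_
      rw [Real.dist_eq, Real.dist_eq, Real.coe_toNNReal Lg hLg0]
      exact hgLip x y
    exact this.continuous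
  refine ⟨4 * Lg + 1, by positivity, ?_⟩
  intro T hT h hh hh2 hTh u hu
  rw [Set.mem_Icc] at hu
  have hT0 : (0 : ℝ) < T := by exact_mod_cast hT
  set F : ℝ → ℝ := fun w => (1 / h) * g ((w - u) / h) with hFdef
  have hFval : ∀ w : ℝ, F w = (1 / h) * g ((w - u) / h) := fun _ => rfl
  have hFcont : Continuous F := by
    apply Continuous.mul continuous_const
    exact hgcont.comp ((continuous_id.sub continuous_const).div_const h)
  have hFlip : ∀ x y : ℝ, |F x - F y| ≤ Lg / h ^ 2 * |x - y| := by
    intro x y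
    have hx : F x - F y = (1 / h) * (g ((x - u) / h) - g ((y - u) / h)) := by
      rw [hFval, hFval]; ring
    rw [hx, abs_mul, abs_of_pos (by positivity : (0 : ℝ) < 1 / h)]
    have h2 := hgLip ((x - u) / h) ((y - u) / h)
    have harg : (x - u) / h - (y - u) / h = (x - y) / h := by ring
    rw [harg, abs_div, abs_of_pos hh] at h2
    calc 1 / h * |g ((x - u) / h) - g ((y - u) / h)| ≤ 1 / h * (Lg * (|x - y| / h)) := by
          exact mul_le_mul_of_nonneg_left h2 (by positivity)
      _ = Lg / h ^ 2 * |x - y| := by ring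
  -- rewrite the integral
  have hI1 : (∫ w in Set.Icc (0 : ℝ) 1, (1 / h) * K ((w - u) / h) * ((w - u) / h) ^ ℓ)
      = ∫ w in Set.Icc (0 : ℝ) 1, F w := by
    simp only [mul_assoc, hg_eq, hFval]
  have hI2 : (∫ w in Set.Icc (0 : ℝ) 1, F w) = ∫ w in (0 : ℝ)..1, F w := by
    rw [MeasureTheory.integral_Icc_eq_integral_Ioc,
      intervalIntegral.integral_of_le (by norm_num)]
  have hsum_int : (∫ w in (0 : ℝ)..1, F w)
      = ∑ i ∈ Finset.range T, ∫ w in ((i : ℝ) / T)..(((i : ℝ) + 1) / T), F w := by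
    have hadj := intervalIntegral.sum_integral_adjacent_intervals
      (a := fun i : ℕ => (i : ℝ) / T) (μ := MeasureTheory.volume) (f := F) (n := T)
      (fun k _ => hFcont.intervalIntegrable _ _)
    push_cast at hadj
    rw [zero_div, div_self (ne_of_gt hT0)] at hadj
    exact hadj.symm
  -- rewrite the sum
  have hsum : (∑ t ∈ Finset.Icc 1 T, K (((t : ℝ) / T - u) / h) * (((t : ℝ) / T - u) / h) ^ ℓ)
      = ∑ i ∈ Finset.range T, g ((((i : ℝ) + 1) / T - u) / h) := by
    rw [← Finset.Ico_add_one_right_eq_Icc, Finset.sum_Ico_eq_sum_range]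
    refine Finset.sum_congr rfl fun k _ => ?_
    have hcast : ((1 + k : ℕ) : ℝ) = (k : ℝ) + 1 := by push_cast; ring
    rw [hcast, hg_eq]
  have hS : (1 / ((T : ℝ) * h)) * ∑ i ∈ Finset.range T, g ((((i : ℝ) + 1) / T - u) / h)
      = ∑ i ∈ Finset.range T, (1 / (T : ℝ)) * F (((i : ℝ) + 1) / T) := by
    rw [Finset.mul_sum]
    refine Finset.sum_congr rfl fun i _ => ?_
    rw [hFval]
    ring
  rw [hsum, hS, hI1, hI2, hsum_int, ← Finset.sum_sub_distrib]
  -- the bad cells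
  set bad : ℕ → Prop := fun i => u - h ≤ ((i : ℝ) + 1) / T ∧ (i : ℝ) / T ≤ u + h with hbaddef
  set B : ℝ := Lg / h ^ 2 * (1 / (T : ℝ)) * (1 / (T : ℝ)) with hBdef
  have hB0 : 0 ≤ B := by
    rw [hBdef]
    exact mul_nonneg (mul_nonneg (div_nonneg hLg0 (sq_nonneg h)) (by positivity)) (by positivity)
  -- per-cell bound
  have hd : ∀ i ∈ Finset.range T,
      |(1 / (T : ℝ)) * F (((i : ℝ) + 1) / T)
        - ∫ w in ((i : ℝ) / T)..(((i : ℝ) + 1) / T), F w| ≤ if bad i then B else 0 := by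
    intro i _
    have hpq : (i : ℝ) / T ≤ ((i : ℝ) + 1) / T := by
      gcongr
      linarith
    have hqp : ((i : ℝ) + 1) / T - (i : ℝ) / T = 1 / T := by field_simp; ring
    have hconst : (1 / (T : ℝ)) * F (((i : ℝ) + 1) / T)
        = ∫ _ in ((i : ℝ) / T)..(((i : ℝ) + 1) / T), F (((i : ℝ) + 1) / T) := by
      rw [intervalIntegral.integral_const, smul_eq_mul, hqp]
    by_cases hb : bad i
    · rw [if_pos hb, hconst,
        ← intervalIntegral.integral_sub intervalIntegrable_const
          (hFcont.intervalIntegrable _ _)]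
      have hbound : ∀ w ∈ Set.uIoc ((i : ℝ) / T) (((i : ℝ) + 1) / T),
          ‖F (((i : ℝ) + 1) / T) - F w‖ ≤ Lg / h ^ 2 * (1 / (T : ℝ)) := by
        intro w hw
        rw [Set.uIoc_of_le hpq, Set.mem_Ioc] at hw
        rw [Real.norm_eq_abs]
        refine (hFlip _ w).trans ?_
        refine mul_le_mul_of_nonneg_left ?_ (div_nonneg hLg0 (sq_nonneg h))
        rw [abs_of_nonneg (by linarith [hw.2] : (0 : ℝ) ≤ ((i : ℝ) + 1) / T - w)]
        linarith [hw.1, hqp]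
      have hni := intervalIntegral.norm_integral_le_of_norm_le_const hbound
      rw [Real.norm_eq_abs] at hni
      refine hni.trans ?_
      rw [abs_of_nonneg (by linarith : (0 : ℝ) ≤ ((i : ℝ) + 1) / T - (i : ℝ) / T), hqp]
    · rw [if_neg hb]
      have hF0 : ∀ w ∈ Set.uIcc ((i : ℝ) / T) (((i : ℝ) + 1) / T), F w = 0 := by
        intro w hw
        rw [Set.uIcc_of_le hpq, Set.mem_Icc] at hw
        rcases not_and_or.mp hb with h1 | h2
        · have h1' : ((i : ℝ) + 1) / T < u - h := not_le.mp h1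
          have harg : (w - u) / h < -1 := by
            rw [div_lt_iff₀ hh]
            linarith [hw.2]
          rw [hFval, hg0 _ (lt_abs.mpr (Or.inr (by linarith))), mul_zero]
        · have h2' : u + h < (i : ℝ) / T := not_le.mp h2
          have harg : 1 < (w - u) / h := by
            rw [lt_div_iff₀ hh]
            linarith [hw.1]
          rw [hFval, hg0 _ (lt_abs.mpr (Or.inl harg)), mul_zero]
      have hq0 : F (((i : ℝ) + 1) / T) = 0 := hF0 _ Set.right_mem_uIcc
      rw [intervalIntegral.integral_congr hF0, intervalIntegral.integral_zero, hq0,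
        mul_zero, sub_zero, abs_zero]
  -- counting the bad cells
  have hcard : ((Finset.filter bad (Finset.range T)).card : ℝ) ≤ 4 * (T : ℝ) * h := by
    rcases (Finset.filter bad (Finset.range T)).eq_empty_or_nonempty with he | ⟨j, hj⟩
    · rw [he]; simp; positivity
    · set m₀ : ℕ := ⌈(T : ℝ) * (u - h) - 1⌉₊ with hm₀
      set M₀ : ℕ := ⌊(T : ℝ) * (u + h)⌋₊ with hM₀
      have hbd : ∀ i : ℕ, bad i → m₀ ≤ i ∧ i ≤ M₀ := by
        intro i hbi
        obtain ⟨h1, h2⟩ := hbi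
        constructor
        · rw [hm₀, Nat.ceil_le]
          rw [le_div_iff₀ hT0] at h1
          nlinarith
        · rw [hM₀]
          apply Nat.le_floor
          rw [div_le_iff₀ hT0] at h2
          nlinarith
      have hsubs : Finset.filter bad (Finset.range T) ⊆ Finset.Icc m₀ M₀ := by
        intro i hi
        rw [Finset.mem_filter] at hi
        rw [Finset.mem_Icc]
        exact hbd i hi.2
      have hmM : m₀ ≤ M₀ := by
        have := hbd j (Finset.mem_filter.mp hj).2
        omega
      have h1 : (Finset.filter bad (Finset.range T)).card ≤ M₀ + 1 - m₀ :=
        (Finset.card_le_card hsubs).trans_eq (Nat.card_Icc _ _)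
      have h2 : ((Finset.filter bad (Finset.range T)).card : ℝ) ≤ (M₀ : ℝ) + 1 - m₀ := by
        have hc := Nat.cast_le (α := ℝ).mpr h1
        rw [Nat.cast_sub (by omega)] at hc
        push_cast at hc ⊢
        linarith
      have hM : (M₀ : ℝ) ≤ (T : ℝ) * (u + h) := by
        rw [hM₀]
        exact Nat.floor_le (mul_nonneg (le_of_lt hT0) (by linarith [hu.1]))
      have hm : (T : ℝ) * (u - h) - 1 ≤ (m₀ : ℝ) := by rw [hm₀]; exact Nat.le_ceil _
      have hexp : (T : ℝ) * (u + h) - (T : ℝ) * (u - h) = 2 * ((T : ℝ) * h) := by ring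
      linarith
  -- put everything together
  calc |∑ i ∈ Finset.range T, ((1 / (T : ℝ)) * F (((i : ℝ) + 1) / T)
          - ∫ w in ((i : ℝ) / T)..(((i : ℝ) + 1) / T), F w)|
      ≤ ∑ i ∈ Finset.range T, |(1 / (T : ℝ)) * F (((i : ℝ) + 1) / T)
          - ∫ w in ((i : ℝ) / T)..(((i : ℝ) + 1) / T), F w| :=
        Finset.abs_sum_le_sum_abs _ _
    _ ≤ ∑ i ∈ Finset.range T, (if bad i then B else 0) := Finset.sum_le_sum hd
    _ = ((Finset.filter bad (Finset.range T)).card : ℝ) * B := by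
        rw [← Finset.sum_filter, Finset.sum_const, nsmul_eq_mul]
    _ ≤ 4 * (T : ℝ) * h * B := mul_le_mul_of_nonneg_right hcard hB0
    _ = 4 * Lg / ((T : ℝ) * h) := by
        rw [hBdef]
        field_simp
    _ ≤ (4 * Lg + 1) / ((T : ℝ) * h) := by
        gcongr
        linarith
end
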